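/- arXiv:0710.3493 — 2 statements merged into one kernel-verified Lean document; each statement's English description precedes it below -/
import Mathlib

section
/- In the Schröder case (p_1 > 0), with τ := −log p_1 / log μ, one has P{W < 1} > 0 and, for all 0 < ε < 1, P{W < ε} ≥ p_1 · P{W < 1} · ε^τ. -/
/-!
Call the individuals `(k, 0)`, `k < n`, the spine. With probability `p₁ⁿ` each of them has exactly
one child, so that generation `n` is a single individual. On that event `Z (n + m) = Z' m`, where
`Z'` is the process grown from the offspring variables of generations `≥ n`; `Z'` is independent of
the spine and has the law of `Z`, and `W = μ⁻ⁿ W'`. Hence `P {W < μ⁻ⁿ t} ≥ p₁ⁿ P {W < t}`. Taking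
`t = μᵐ` large gives `P {W < 1} > 0`, and `t = 1`, `n = ⌈log (1/ε) / log μ⌉` gives the `ε ^ τ`
bound.
-/

open MeasureTheory ProbabilityTheory Filter
open scoped Pointwise

/-- No boundedness is needed: both sides take the junk value `0` in the same cases. -/
theorem Real.limsup_const_mul {α : Type*} {f : Filter α} {u : α → ℝ} {c : ℝ} (hc : 0 < c) :
    limsup (fun n => c * u n) f = c * limsup u f := by
  have hset : {a | ∀ᶠ n in f, c * u n ≤ a} = c • {a | ∀ᶠ n in f, u n ≤ a} := by
    ext a
    simp only [Set.mem_smul_set_iff_inv_smul_mem₀ hc.ne', Set.mem_ofPred_eq, smul_eq_mul]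
    refine eventually_congr (Eventually.of_forall fun n => ?_)
    rw [le_inv_mul_iff₀ hc]
  rw [limsup_eq, limsup_eq, hset, Real.sInf_smul_of_nonneg hc.le, smul_eq_mul]

theorem MeasurableSpace.comap_pi_le_biSup_comap {Ω ι δ β : Type*} [MeasurableSpace β]
    (f : ι → Ω → β) (d : δ → ι) :
    MeasurableSpace.comap (fun ω k => f (d k) ω) MeasurableSpace.pi
      ≤ ⨆ i ∈ Set.range d, MeasurableSpace.comap (f i) ‹_› := by
  simp only [MeasurableSpace.pi, MeasurableSpace.comap_iSup, MeasurableSpace.comap_comp,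
    Function.comp_def, iSup_le_iff]
  exact fun k => le_biSup (fun i => MeasurableSpace.comap (f i) _) (Set.mem_range_self k)

namespace ProbabilityTheory

variable {Ω ι β : Type*} [MeasurableSpace Ω] [MeasurableSpace β] {P : Measure Ω} {f : ι → Ω → β}

theorem iIndepFun.map_precomp_eq_infinitePi {κ : Type*} {ν : Measure β} (hf : iIndepFun f P)
    (hmeas : ∀ i, Measurable (f i)) (hlaw : ∀ i, P.map (f i) = ν) {e : κ → ι}
    (he : Function.Injective e) :
    P.map (fun ω k => f (e k) ω) = Measure.infinitePi fun _ => ν := by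
  rw [(hf.precomp he).map_fun_eq_infinitePi_map fun k => hmeas (e k)]
  simp_rw [hlaw]

theorem iIndepFun.indepFun_precomp_of_disjoint {α γ : Type*} (hf : iIndepFun f P)
    (hmeas : ∀ i, Measurable (f i)) {a : α → ι} {b : γ → ι}
    (hab : Disjoint (Set.range a) (Set.range b)) :
    IndepFun (fun ω i => f (a i) ω) (fun ω j => f (b j) ω) P := by
  rw [IndepFun_iff_Indep]
  exact indep_of_indep_of_le_right (indep_of_indep_of_le_left
    (indep_iSup_of_disjoint (fun i => (hmeas i).comap_le) hf.iIndep hab)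
    (MeasurableSpace.comap_pi_le_biSup_comap f a)) (MeasurableSpace.comap_pi_le_biSup_comap f b)

end ProbabilityTheory

namespace GaltonWatson

/-- The population of generation `n` when `x (k, i)` is the number of children of the `i`-th
individual of generation `k`. -/
def pop : ℕ → (ℕ × ℕ → ℕ) → ℕ
  | 0, _ => 1
  | n + 1, x => ∑ i ∈ Finset.range (pop n x), x (n, i)

noncomputable def limit (c : ℝ) (x : ℕ × ℕ → ℕ) : ℝ :=
  limsup (fun n => (pop n x : ℝ) / c ^ n) atTop

def shift (n : ℕ) (x : ℕ × ℕ → ℕ) : ℕ × ℕ → ℕ := fun j => x (n + j.1, j.2)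

theorem measurable_pop (n : ℕ) : Measurable (pop n) := by
  induction n with
  | zero => exact measurable_const
  | succ n ih =>
    have hsum : Measurable fun y : (ℕ × ℕ → ℕ) × ℕ => ∑ i ∈ Finset.range y.2, y.1 (n, i) :=
      measurable_from_prod_countable_left fun k =>
        Finset.measurable_sum (Finset.range k) fun i _ => measurable_pi_apply (n, i)
    exact hsum.comp (measurable_id.prodMk ih)

theorem measurable_limit (c : ℝ) : Measurable (limit c) :=
  Measurable.limsup fun n => (measurable_from_nat.comp (measurable_pop n)).div_const _

theorem eq_pop_of_recursion {Z : ℕ → ℕ} {x : ℕ × ℕ → ℕ} (h0 : Z 0 = 1)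
    (hrec : ∀ n, Z (n + 1) = ∑ i ∈ Finset.range (Z n), x (n, i)) : ∀ m, Z m = pop m x
  | 0 => h0
  | m + 1 => by rw [hrec, eq_pop_of_recursion h0 hrec m, pop]

theorem pop_eq_one_of_spine {n : ℕ} {x : ℕ × ℕ → ℕ} (hx : ∀ k < n, x (k, 0) = 1) :
    ∀ k ≤ n, pop k x = 1
  | 0, _ => rfl
  | k + 1, hk => by
    rw [pop, pop_eq_one_of_spine hx k (by omega), Finset.sum_range_one, hx k (by omega)]

theorem pop_add_of_spine {n : ℕ} {x : ℕ × ℕ → ℕ} (hx : ∀ k < n, x (k, 0) = 1) (m : ℕ) :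
    pop (n + m) x = pop m (shift n x) := by
  induction m with
  | zero => exact pop_eq_one_of_spine hx n le_rfl
  | succ m ih => rw [← add_assoc, pop, ih]; rfl

theorem limit_eq_of_spine {c : ℝ} (hc : 0 < c) {n : ℕ} {x : ℕ × ℕ → ℕ}
    (hx : ∀ k < n, x (k, 0) = 1) : limit c x = (c ^ n)⁻¹ * limit c (shift n x) := by
  rw [limit, limit, ← Real.limsup_const_mul (inv_pos.2 (pow_pos hc n)),
    ← limsup_nat_add _ n]
  congr 1
  ext m
  rw [add_comm m n, pop_add_of_spine hx, pow_add]
  field_simp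

variable {Ω : Type*} [MeasurableSpace Ω] {P : Measure Ω} {X : ℕ × ℕ → Ω → ℕ} {ν : Measure ℕ}
  [IsProbabilityMeasure ν]

theorem pow_mul_measure_limit_lt_le (hX : ∀ j, Measurable (X j)) (hind : iIndepFun X P)
    (hlaw : ∀ j, P.map (X j) = ν) {c : ℝ} (hc : 0 < c) (n : ℕ) (t : ℝ) :
    ν {1} ^ n * P {ω | limit c (fun j => X j ω) < t}
      ≤ P {ω | limit c (fun j => X j ω) < (c ^ n)⁻¹ * t} := by
  set spine : Ω → Fin n → ℕ := fun ω k => X ((k : ℕ), 0) ω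
  set tail : Ω → ℕ × ℕ → ℕ := fun ω j => X (n + j.1, j.2) ω
  set C := {x | limit c x < t}
  have hC : MeasurableSet C := measurableSet_lt (measurable_limit c) measurable_const
  have hspine_inj : Function.Injective fun k : Fin n => ((k : ℕ), 0) :=
    fun k l h => Fin.ext (congrArg Prod.fst h)
  have htail_inj : Function.Injective fun j : ℕ × ℕ => (n + j.1, j.2) :=
    fun i j h => Prod.ext (by simpa using congrArg Prod.fst h) (by simpa using congrArg Prod.snd h)
  have hdisj : Disjoint (Set.range fun k : Fin n => ((k : ℕ), 0))
      (Set.range fun j : ℕ × ℕ => (n + j.1, j.2)) := by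
    refine Set.disjoint_left.2 ?_
    rintro _ ⟨k, rfl⟩ ⟨j, hj⟩
    have := congrArg Prod.fst hj
    simp only at this
    omega
  have hspine : P (spine ⁻¹' {fun _ => 1}) = ν {1} ^ n := by
    rw [← Measure.map_apply (measurable_pi_lambda _ fun k => hX _) (measurableSet_singleton _),
      hind.map_precomp_eq_infinitePi hX hlaw hspine_inj, ← Set.univ_pi_singleton,
      ← Finset.coe_univ, Measure.infinitePi_pi _ fun _ _ => measurableSet_singleton _]
    simp
  have htail : P (tail ⁻¹' C) = P {ω | limit c (fun j => X j ω) < t} := by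
    rw [← Measure.map_apply (measurable_pi_lambda _ fun j => hX _) hC,
      hind.map_precomp_eq_infinitePi hX hlaw htail_inj,
      ← hind.map_precomp_eq_infinitePi hX hlaw Function.injective_id,
      Measure.map_apply (measurable_pi_lambda _ fun j => hX _) hC]
    rfl
  have hsub : spine ⁻¹' {fun _ => 1} ∩ tail ⁻¹' C
      ⊆ {ω | limit c (fun j => X j ω) < (c ^ n)⁻¹ * t} := by
    rintro ω ⟨hω1, hωC⟩
    have hx : ∀ k < n, X (k, 0) ω = 1 := fun k hk => congrFun hω1 ⟨k, hk⟩
    show limit c (fun j => X j ω) < (c ^ n)⁻¹ * t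
    rw [limit_eq_of_spine hc hx]
    exact mul_lt_mul_of_pos_left hωC (by positivity)
  calc ν {1} ^ n * P {ω | limit c (fun j => X j ω) < t}
      = P (spine ⁻¹' {fun _ => 1}) * P (tail ⁻¹' C) := by rw [hspine, htail]
    _ = P (spine ⁻¹' {fun _ => 1} ∩ tail ⁻¹' C) :=
      ((hind.indepFun_precomp_of_disjoint hX hdisj).measure_inter_preimage_eq_mul _ _
        (measurableSet_singleton _) hC).symm
    _ ≤ _ := measure_mono hsub

end GaltonWatson

theorem MeasureTheory.Measure.map_eq_map_of_forall_toReal_measure_eq {Ω : Type*}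
    [MeasurableSpace Ω] {P : Measure Ω} [IsFiniteMeasure P] {Y Y' : Ω → ℕ} (hY : Measurable Y)
    (hY' : Measurable Y') (h : ∀ k, (P {ω | Y ω = k}).toReal = (P {ω | Y' ω = k}).toReal) :
    P.map Y = P.map Y' :=
  Measure.ext_iff_singleton.2 fun k => by
    rw [Measure.map_apply hY (measurableSet_singleton k),
      Measure.map_apply hY' (measurableSet_singleton k),
      ← ENNReal.toReal_eq_toReal_iff' (measure_ne_top _ _) (measure_ne_top _ _)]
    exact h k

theorem exists_pow_inv_le_and_mul_rpow_le_pow {q μ ε : ℝ} (hq : 0 < q) (hq1 : q ≤ 1)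
    (hμ : 1 < μ) (hε : 0 < ε) (hε1 : ε ≤ 1) :
    ∃ n : ℕ, (μ ^ n)⁻¹ ≤ ε ∧ q * ε ^ (-Real.log q / Real.log μ) ≤ q ^ n := by
  have hlogμ : 0 < Real.log μ := Real.log_pos hμ
  set x := Real.log ε⁻¹ / Real.log μ
  have hx : 0 ≤ x := div_nonneg (Real.log_nonneg (one_le_inv₀ hε |>.2 hε1)) hlogμ.le
  refine ⟨⌈x⌉₊, ?_, ?_⟩
  · rw [inv_le_comm₀ (by positivity) hε, ← Real.log_le_log_iff (by positivity) (by positivity),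
      Real.log_pow, ← div_le_iff₀ hlogμ]
    exact Nat.le_ceil x
  · rw [← Real.log_le_log_iff (by positivity) (by positivity), Real.log_mul hq.ne' (by positivity),
      Real.log_rpow hε, Real.log_pow]
    have hτ : -Real.log q / Real.log μ * Real.log ε = x * Real.log q := by
      simp only [x, Real.log_inv]
      field_simp
    have hceil : (⌈x⌉₊ : ℝ) * Real.log q ≥ (x + 1) * Real.log q :=
      mul_le_mul_of_nonpos_right (Nat.ceil_lt_add_one hx).le (Real.log_nonpos hq.le hq1)
    linarith

theorem mul_mul_rpow_le_of_pow_mul_le {G : ℝ → ℝ} {q μ ε : ℝ} (hG : Monotone G) (hG1 : 0 ≤ G 1)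
    (hq : 0 < q) (hq1 : q ≤ 1) (hμ : 1 < μ) (hscale : ∀ n : ℕ, q ^ n * G 1 ≤ G (μ ^ n)⁻¹)
    (hε : 0 < ε) (hε1 : ε ≤ 1) :
    q * G 1 * ε ^ (-Real.log q / Real.log μ) ≤ G ε := by
  obtain ⟨n, hμn, hqn⟩ := exists_pow_inv_le_and_mul_rpow_le_pow hq hq1 hμ hε hε1
  calc q * G 1 * ε ^ (-Real.log q / Real.log μ)
      = q * ε ^ (-Real.log q / Real.log μ) * G 1 := by ring
    _ ≤ q ^ n * G 1 := mul_le_mul_of_nonneg_right hqn hG1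
    _ ≤ G (μ ^ n)⁻¹ := hscale n
    _ ≤ G ε := hG hμn

theorem measure_lt_one_ne_zero_of_scaling {Ω : Type*} [MeasurableSpace Ω] {P : Measure Ω}
    [NeZero P] {F : Ω → ℝ} {q : ENNReal} {μ : ℝ} (hq : q ≠ 0) (hμ : 1 < μ)
    (hscale : ∀ (n : ℕ) (t : ℝ), q ^ n * P {ω | F ω < t} ≤ P {ω | F ω < (μ ^ n)⁻¹ * t}) :
    P {ω | F ω < 1} ≠ 0 := by
  obtain ⟨m, hm⟩ : ∃ m : ℕ, P {ω | F ω < μ ^ m} ≠ 0 := by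
    by_contra! h
    have hnull : P (⋃ m : ℕ, {ω | F ω < μ ^ m}) = 0 := measure_iUnion_null h
    have hcover : (⋃ m : ℕ, {ω | F ω < μ ^ m}) = Set.univ :=
      Set.iUnion_eq_univ_iff.2 fun ω => pow_unbounded_of_one_lt (F ω) hμ
    rw [hcover, Measure.measure_univ_eq_zero] at hnull
    exact NeZero.ne P hnull
  have h := hscale m (μ ^ m)
  rw [inv_mul_cancel₀ (pow_pos (zero_lt_one.trans hμ) m).ne'] at h
  exact ((ENNReal.mul_pos (pow_ne_zero m hq) hm).trans_le h).ne'

theorem gw_schroeder_lower_bound_general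
    {Ω : Type*} [MeasurableSpace Ω] (P : Measure Ω) [IsProbabilityMeasure P]
    (p : ℕ → ℝ) (N : ℕ → ℕ → Ω → ℕ) (Z : ℕ → Ω → ℕ) (μ : ℝ)
    (hNmeas : ∀ n i, Measurable (N n i))
    (hNdist : ∀ n i k, (P {ω | N n i ω = k}).toReal = p k)
    (hNindep : iIndepFun (fun ni : ℕ × ℕ => N ni.1 ni.2) P)
    (hμ : 1 < μ)
    (hZ0 : ∀ ω, Z 0 ω = 1)
    (hZrec : ∀ n ω, Z (n + 1) ω = ∑ i ∈ Finset.range (Z n ω), N n i ω)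
    (W : Ω → ℝ)
    (hW : ∀ ω, W ω = Filter.limsup (fun n => (Z n ω : ℝ) / μ ^ n) Filter.atTop)
    (hp1 : 0 < p 1) :
    0 < (P {ω | W ω < 1}).toReal ∧
    ∀ ε : ℝ, 0 < ε → ε < 1 →
      p 1 * (P {ω | W ω < 1}).toReal * ε ^ (-Real.log (p 1) / Real.log μ) ≤ (P {ω | W ω < ε}).toReal := by
  set X : ℕ × ℕ → Ω → ℕ := fun j => N j.1 j.2
  have hX : ∀ j, Measurable (X j) := fun j => hNmeas j.1 j.2
  have hWlim : ∀ ω, W ω = GaltonWatson.limit μ (fun j => X j ω) := fun ω => by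
    simp only [hW, GaltonWatson.eq_pop_of_recursion (Z := (Z · ω)) (x := fun j => X j ω)
      (hZ0 ω) (hZrec · ω)]
    rfl
  have hlaw : ∀ j, P.map (X j) = P.map (N 0 0) := fun j =>
    Measure.map_eq_map_of_forall_toReal_measure_eq (hX j) (hNmeas 0 0) fun k =>
      (hNdist j.1 j.2 k).trans (hNdist 0 0 k).symm
  have hlaw1 : P.map (N 0 0) {1} = ENNReal.ofReal (p 1) := by
    rw [Measure.map_apply (hNmeas 0 0) (measurableSet_singleton 1), ← hNdist 0 0 1,
      ENNReal.ofReal_toReal (measure_ne_top _ _)]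
    rfl
  have hp1_le : p 1 ≤ 1 := by
    rw [← hNdist 0 0 1]
    exact ENNReal.toReal_le_of_le_ofReal zero_le_one (ENNReal.ofReal_one ▸ prob_le_one)
  have := Measure.isProbabilityMeasure_map (μ := P) (hNmeas 0 0).aemeasurable
  have hscale : ∀ (n : ℕ) (t : ℝ), ENNReal.ofReal (p 1) ^ n * P {ω | W ω < t}
      ≤ P {ω | W ω < (μ ^ n)⁻¹ * t} := by
    simpa only [hWlim, hlaw1] using
      GaltonWatson.pow_mul_measure_limit_lt_le hX hNindep hlaw (zero_lt_one.trans hμ)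
  have hpos := measure_lt_one_ne_zero_of_scaling (ENNReal.ofReal_pos.2 hp1).ne' hμ hscale
  refine ⟨ENNReal.toReal_pos hpos (measure_ne_top _ _), fun ε hε hε1 => ?_⟩
  refine mul_mul_rpow_le_of_pow_mul_le (G := fun t => (P {ω | W ω < t}).toReal)
    (fun s t hst => ENNReal.toReal_mono (measure_ne_top _ _)
      (measure_mono fun ω hω => lt_of_lt_of_le hω hst))
    ENNReal.toReal_nonneg hp1 hp1_le hμ (fun n => ?_) hε hε1.le
  simpa [ENNReal.toReal_ofReal hp1.le] using
    ENNReal.toReal_mono (measure_ne_top _ _) (hscale n 1)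

theorem gw_schroeder_lower_bound
    {Ω : Type*} [MeasurableSpace Ω] (P : Measure Ω) [IsProbabilityMeasure P]
    (p : ℕ → ℝ) (N : ℕ → ℕ → Ω → ℕ) (Z : ℕ → Ω → ℕ) (μ : ℝ)
    (hp0 : p 0 = 0) (hpnn : ∀ k, 0 ≤ p k) (hpsum : HasSum p 1)
    (hnondeg : ∀ k, p k < 1)
    (hNmeas : ∀ n i, Measurable (N n i))
    (hNdist : ∀ n i k, (P {ω | N n i ω = k}).toReal = p k)
    (hNindep : iIndepFun (fun ni : ℕ × ℕ => N ni.1 ni.2) P)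
    (hmean : HasSum (fun k : ℕ => (k : ℝ) * p k) μ) (hμ : 1 < μ)
    (hNlogN : Summable (fun k : ℕ => (k : ℝ) * Real.log k * p k))
    (hZ0 : ∀ ω, Z 0 ω = 1)
    (hZrec : ∀ n ω, Z (n + 1) ω = ∑ i ∈ Finset.range (Z n ω), N n i ω)
    (W : Ω → ℝ)
    (hW : ∀ ω, W ω = Filter.limsup (fun n => (Z n ω : ℝ) / μ ^ n) Filter.atTop)
    (hp1 : 0 < p 1) :
    0 < (P {ω | W ω < 1}).toReal ∧
    ∀ ε : ℝ, 0 < ε → ε < 1 →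
      p 1 * (P {ω | W ω < 1}).toReal * ε ^ (-Real.log (p 1) / Real.log μ) ≤ (P {ω | W ω < ε}).toReal :=
  gw_schroeder_lower_bound_general P p N Z μ hNmeas hNdist hNindep hμ hZ0 hZrec W hW hp1
end

section
/- For every k ≥ 0 the martingale limit satisfies the branching self-similarity: if (W_i : i ≥ 1) are i.i.d. random variables with the distribution of W, independent of Z_k, then W has the same distribution as μ^{−k} Σ_{i=1}^{Z_k} W_i. -/
/-!
Given the first `k` generations, the `Z k` individuals start independent copies of the process.
For the Laplace transform `φ c = E e^{-c W}` this reads `φ c = E [φ (c / μ ^ k) ^ Z k]`: if `f` is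
the offspring generating function then `E s ^ Z n = f^[n] s`, so
`E e^{-c Z (k + n) / μ ^ (k + n)} = E [f^[n] (e^{-c / μ ^ (k + n)}) ^ Z k]`, and `n → ∞` gives the
identity because the nonnegative martingale `Z n / μ ^ n` converges to `W` almost surely. By
independence the right-hand side is also the Laplace transform of `μ ^ (-k) ∑_{i < Z k} W_i`.
Finally, the Laplace transform at the integers determines the law of a nonnegative variable: it
gives the moments of `e^{-W} ∈ [0, 1]`, and polynomials are dense in `C([0, 1])`.
-/

open MeasureTheory ProbabilityTheory Filter Set

open scoped ENNReal Topology

theorem measurable_apply_nat_index {Ω β : Type*} {m : MeasurableSpace Ω} [MeasurableSpace β]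
    {X : Ω → ℕ} (hX : Measurable X) {g : ℕ → Ω → β} (hg : ∀ n, Measurable (g n)) :
    Measurable fun ω => g (X ω) ω :=
  (measurable_from_prod_countable_right (f := fun p : ℕ × Ω => g p.1 p.2) hg).comp
    (hX.prodMk measurable_id)

theorem Continuous.integrable_of_ae_mem_Icc {ν : Measure ℝ} [IsFiniteMeasure ν] {a b : ℝ}
    (hν : ∀ᵐ x ∂ν, x ∈ Icc a b) {g : ℝ → ℝ} (hg : Continuous g) : Integrable g ν := by
  rw [← Measure.restrict_eq_self_of_ae_mem hν]
  exact hg.integrableOn_Icc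

theorem integral_eq_of_integral_pow_eq {ν ν' : Measure ℝ} [IsProbabilityMeasure ν]
    [IsProbabilityMeasure ν'] {a b : ℝ} (hν : ∀ᵐ x ∂ν, x ∈ Icc a b)
    (hν' : ∀ᵐ x ∂ν', x ∈ Icc a b) (hmom : ∀ n : ℕ, ∫ x, x ^ n ∂ν = ∫ x, x ^ n ∂ν')
    {g : ℝ → ℝ} (hg : Continuous g) : ∫ x, g x ∂ν = ∫ x, g x ∂ν' := by
  have hpoly : ∀ q : Polynomial ℝ, ∫ x, q.eval x ∂ν = ∫ x, q.eval x ∂ν' := fun q => by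
    simp_rw [Polynomial.eval_eq_sum_range]
    rw [integral_finsetSum _ fun j _ =>
        ((continuous_pow j).integrable_of_ae_mem_Icc hν).const_mul _,
      integral_finsetSum _ fun j _ =>
        ((continuous_pow j).integrable_of_ae_mem_Icc hν').const_mul _]
    simp_rw [integral_const_mul, hmom]
  have happrox : ∀ (ρ : Measure ℝ) [IsProbabilityMeasure ρ], (∀ᵐ x ∂ρ, x ∈ Icc a b) →
      ∀ (q : Polynomial ℝ) (δ : ℝ), (∀ x ∈ Icc a b, |q.eval x - g x| < δ) →
      dist (∫ x, g x ∂ρ) (∫ x, q.eval x ∂ρ) ≤ δ := by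
    intro ρ _ hρ q δ hq
    rw [dist_eq_norm, ← integral_sub (hg.integrable_of_ae_mem_Icc hρ)
      (q.continuous.integrable_of_ae_mem_Icc hρ)]
    refine (norm_integral_le_of_norm_le_const (C := δ) ?_).trans_eq (by simp)
    filter_upwards [hρ] with x hx
    rw [Real.norm_eq_abs, abs_sub_comm]
    exact (hq x hx).le
  refine eq_of_forall_dist_le fun ε hε => ?_
  obtain ⟨q, hq⟩ := exists_polynomial_near_of_continuousOn a b g hg.continuousOn (ε / 2)
    (half_pos hε)
  calc dist (∫ x, g x ∂ν) (∫ x, g x ∂ν')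
      ≤ dist (∫ x, g x ∂ν) (∫ x, q.eval x ∂ν) + dist (∫ x, g x ∂ν') (∫ x, q.eval x ∂ν') := by
        rw [hpoly q]; exact dist_triangle_right _ _ _
    _ ≤ ε / 2 + ε / 2 := add_le_add (happrox ν hν q _ hq) (happrox ν' hν' q _ hq)
    _ = ε := add_halves ε

theorem MeasureTheory.Measure.ext_of_integral_pow_eq {ν ν' : Measure ℝ} [IsProbabilityMeasure ν]
    [IsProbabilityMeasure ν'] {a b : ℝ} (hν : ∀ᵐ x ∂ν, x ∈ Icc a b)
    (hν' : ∀ᵐ x ∂ν', x ∈ Icc a b) (hmom : ∀ n : ℕ, ∫ x, x ^ n ∂ν = ∫ x, x ^ n ∂ν') :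
    ν = ν' := by
  refine ext_of_forall_lintegral_eq_of_IsFiniteMeasure fun f => ?_
  have hf : Continuous fun x => (f x : ℝ) := NNReal.continuous_coe.comp f.continuous
  rw [lintegral_coe_eq_integral _ (hf.integrable_of_ae_mem_Icc hν),
    lintegral_coe_eq_integral _ (hf.integrable_of_ae_mem_Icc hν'),
    integral_eq_of_integral_pow_eq hν hν' hmom hf]

section

variable {Ω : Type*} {𝓕 𝓖 m0 : MeasurableSpace Ω} {P : Measure Ω}

theorem lintegral_eq_tsum_setLIntegral_preimage_singleton {X : Ω → ℕ} (hX : Measurable X)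
    (ν : Measure Ω) (f : Ω → ℝ≥0∞) :
    ∫⁻ ω, f ω ∂ν = ∑' n, ∫⁻ ω in X ⁻¹' {n}, f ω ∂ν := by
  rw [← lintegral_iUnion (fun n => hX (measurableSet_singleton n)) (pairwise_disjoint_fiber X),
    ← preimage_iUnion, iUnion_of_singleton, preimage_univ, setLIntegral_univ]

theorem ProbabilityTheory.Indep.setLIntegral_eq_mul (h𝓕 : 𝓕 ≤ m0)
    (h𝓖 : 𝓖 ≤ m0) (hind : Indep 𝓕 𝓖 P) {B : Set Ω} (hB : MeasurableSet[𝓕] B)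
    {h : Ω → ℝ≥0∞} (hh : Measurable[𝓖] h) :
    ∫⁻ ω in B, h ω ∂P = P B * ∫⁻ ω, h ω ∂P := by
  have hB_ind : Measurable[𝓕] (B.indicator (1 : Ω → ℝ≥0∞)) :=
    Measurable.indicator (m := 𝓕) measurable_const hB
  have hind_mul := lintegral_mul_eq_lintegral_mul_lintegral_of_independent_measurableSpace h𝓕 h𝓖
    hind hB_ind hh
  rw [lintegral_indicator_one (h𝓕 B hB)] at hind_mul
  rw [← hind_mul, ← lintegral_indicator (h𝓕 B hB)]
  congr 1 with ω
  by_cases hω : ω ∈ B <;> simp [hω]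

theorem ProbabilityTheory.Indep.setLIntegral_apply_nat_eq
    (h𝓕 : 𝓕 ≤ m0) (h𝓖 : 𝓖 ≤ m0) (hind : Indep 𝓕 𝓖 P) {X : Ω → ℕ} (hX : Measurable[𝓕] X)
    {H : ℕ → Ω → ℝ≥0∞} (hH : ∀ n, Measurable[𝓖] (H n)) {B : Set Ω} (hB : MeasurableSet[𝓕] B) :
    ∫⁻ ω in B, H (X ω) ω ∂P = ∫⁻ ω in B, ∫⁻ ω', H (X ω) ω' ∂P ∂P := by
  have hX' : Measurable X := hX.mono h𝓕 le_rfl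
  rw [lintegral_eq_tsum_setLIntegral_preimage_singleton hX',
    lintegral_eq_tsum_setLIntegral_preimage_singleton hX']
  refine tsum_congr fun n => ?_
  have hfiber : MeasurableSet[𝓕] (X ⁻¹' {n} ∩ B) := (hX (measurableSet_singleton n)).inter hB
  have hX_eq : ∀ ω ∈ X ⁻¹' {n} ∩ B, X ω = n := fun ω hω => hω.1
  rw [Measure.restrict_restrict (hX' (measurableSet_singleton n))]
  calc ∫⁻ ω in X ⁻¹' {n} ∩ B, H (X ω) ω ∂P
      = ∫⁻ ω in X ⁻¹' {n} ∩ B, H n ω ∂P :=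
        setLIntegral_congr_fun (h𝓕 _ hfiber) fun ω hω => by rw [hX_eq ω hω]
    _ = ∫⁻ ω in X ⁻¹' {n} ∩ B, ∫⁻ ω', H n ω' ∂P ∂P := by
        rw [hind.setLIntegral_eq_mul h𝓕 h𝓖 hfiber (hH n), setLIntegral_const, mul_comm]
    _ = ∫⁻ ω in X ⁻¹' {n} ∩ B, ∫⁻ ω', H (X ω) ω' ∂P ∂P :=
        setLIntegral_congr_fun (h𝓕 _ hfiber) fun ω hω => by rw [hX_eq ω hω]

theorem ProbabilityTheory.Indep.lintegral_prod_range_eq_lintegral_pow {α : Type*}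
    [MeasurableSpace α] (h𝓕 : 𝓕 ≤ m0) (h𝓖 : 𝓖 ≤ m0) (hind : Indep 𝓕 𝓖 P) {X : Ω → ℕ}
    (hX : Measurable[𝓕] X) {Y : ℕ → Ω → α} (hY : ∀ i, Measurable[𝓖] (Y i))
    (hYind : iIndepFun Y P) {g : α → ℝ≥0∞} (hg : Measurable g) {a : ℝ≥0∞}
    (ha : ∀ i, ∫⁻ ω, g (Y i ω) ∂P = a) :
    ∫⁻ ω, ∏ i ∈ Finset.range (X ω), g (Y i ω) ∂P = ∫⁻ ω, a ^ X ω ∂P := by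
  have hfreeze := hind.setLIntegral_apply_nat_eq h𝓕 h𝓖 hX
    (H := fun n ω => ∏ i ∈ Finset.range n, g (Y i ω))
    (fun n => Finset.measurable_prod _ fun i _ => hg.comp (hY i)) MeasurableSet.univ
  simp only [Measure.restrict_univ] at hfreeze
  rw [hfreeze]
  congr 1 with ω
  rw [lintegral_prod_eq_prod_lintegral_of_indepFun _ (fun i ω' => g (Y i ω'))
    (hYind.comp (fun _ => g) fun _ => hg) fun i => hg.comp ((hY i).mono h𝓖 le_rfl)]
  simp only [ha, Finset.prod_const, Finset.card_range]

theorem ProbabilityTheory.iIndepFun.lintegral_prod_range_eq_lintegral_pow {X : Ω → ℕ}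
    {V : ℕ → Ω → ℝ} (hX : Measurable X) (hV : ∀ i, Measurable (V i))
    (hind : iIndepFun (fun o : Option ℕ => Option.elim o (fun ω => (X ω : ℝ)) V) P)
    {g : ℝ → ℝ≥0∞} (hg : Measurable g) {a : ℝ≥0∞} (ha : ∀ i, ∫⁻ ω, g (V i ω) ∂P = a) :
    ∫⁻ ω, ∏ i ∈ Finset.range (X ω), g (V i ω) ∂P = ∫⁻ ω, a ^ X ω ∂P := by
  set m : Option ℕ → MeasurableSpace Ω := fun o =>
    MeasurableSpace.comap (Option.elim o (fun ω => (X ω : ℝ)) V) inferInstance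
  have hm : ∀ o, m o ≤ m0 := fun o => by
    cases o with
    | none => exact (measurable_from_nat.comp hX).comap_le
    | some i => exact (hV i).comap_le
  have hindep := indep_iSup_of_disjoint hm hind.iIndep
    (S := {none}) (T := range some) (by simp)
  have hVind : iIndepFun V P := (iIndepFun.precomp (Option.some_injective ℕ) hind :)
  refine Indep.lintegral_prod_range_eq_lintegral_pow (iSup₂_le fun o _ => hm o)
    (iSup₂_le fun o _ => hm o) hindep ?_ (fun i => ?_) hVind hg ha
  · have hcast : Measurable[m none] fun ω => (X ω : ℝ) := comap_measurable _
    have hX_eq : X = fun ω => ⌊(X ω : ℝ)⌋₊ := funext fun ω => (Nat.floor_natCast _).symm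
    rw [hX_eq]
    exact (Nat.measurable_floor.comp hcast).mono (le_biSup m (mem_singleton none)) le_rfl
  · have hVi : Measurable[m (some i)] (V i) := comap_measurable (V i)
    exact hVi.mono (le_biSup m (mem_range_self (f := some) i)) le_rfl

theorem ProbabilityTheory.iIndepFun.lintegral_exp_neg_mul_sum_range {X : Ω → ℕ}
    {V : ℕ → Ω → ℝ} (hX : Measurable X) (hV : ∀ i, Measurable (V i))
    (hind : iIndepFun (fun o : Option ℕ => Option.elim o (fun ω => (X ω : ℝ)) V) P)
    {W : Ω → ℝ} (hVW : ∀ i, IdentDistrib (V i) W P P) (t : ℝ) :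
    ∫⁻ ω, ENNReal.ofReal (Real.exp (-(t * ∑ i ∈ Finset.range (X ω), V i ω))) ∂P
      = ∫⁻ ω, (∫⁻ ω', ENNReal.ofReal (Real.exp (-(t * W ω'))) ∂P) ^ X ω ∂P := by
  have hexp : Measurable fun x : ℝ => ENNReal.ofReal (Real.exp (-(t * x))) := by fun_prop
  have hlaw : ∀ i, ∫⁻ ω, ENNReal.ofReal (Real.exp (-(t * V i ω))) ∂P
      = ∫⁻ ω, ENNReal.ofReal (Real.exp (-(t * W ω))) ∂P :=
    fun i => ((hVW i).comp hexp).lintegral_eq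
  rw [← hind.lintegral_prod_range_eq_lintegral_pow hX hV hexp hlaw]
  refine lintegral_congr fun ω => ?_
  rw [← ENNReal.ofReal_prod_of_nonneg fun i _ => (Real.exp_pos _).le, ← Real.exp_sum,
    Finset.sum_neg_distrib, Finset.mul_sum]

theorem lintegral_comp_eq_tsum_ofReal [IsFiniteMeasure P] {X : Ω → ℕ} (hX : Measurable X)
    {p : ℕ → ℝ} (hXp : ∀ k, (P {ω | X ω = k}).toReal = p k) (g : ℕ → ℝ≥0∞) :
    ∫⁻ ω, g (X ω) ∂P = ∑' k, ENNReal.ofReal (p k) * g k := by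
  rw [← lintegral_map (measurable_of_countable g) hX, lintegral_countable']
  refine tsum_congr fun k => ?_
  rw [Measure.map_apply hX (measurableSet_singleton k), ← hXp k,
    ENNReal.ofReal_toReal (measure_ne_top P _), mul_comm]
  rfl

theorem lintegral_natCast_eq_ofReal_of_hasSum [IsFiniteMeasure P] {X : Ω → ℕ}
    (hX : Measurable X) {p : ℕ → ℝ} (hXp : ∀ k, (P {ω | X ω = k}).toReal = p k)
    (hp : ∀ k, 0 ≤ p k) {μ : ℝ} (hmean : HasSum (fun k : ℕ => (k : ℝ) * p k) μ) :
    ∫⁻ ω, (X ω : ℝ≥0∞) ∂P = ENNReal.ofReal μ := by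
  rw [lintegral_comp_eq_tsum_ofReal hX hXp Nat.cast, ← hmean.tsum_eq,
    ENNReal.ofReal_tsum_of_nonneg (fun k => mul_nonneg k.cast_nonneg (hp k)) hmean.summable]
  refine tsum_congr fun k => ?_
  rw [ENNReal.ofReal_mul k.cast_nonneg, ENNReal.ofReal_natCast, mul_comm]

theorem map_eq_of_lintegral_exp_neg_nat_mul_eq [IsProbabilityMeasure P] {X Y : Ω → ℝ}
    (hX : AEMeasurable X P) (hY : AEMeasurable Y P) (hX0 : 0 ≤ᵐ[P] X) (hY0 : 0 ≤ᵐ[P] Y)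
    (h : ∀ n : ℕ, ∫⁻ ω, ENNReal.ofReal (Real.exp (-(n * X ω))) ∂P
      = ∫⁻ ω, ENNReal.ofReal (Real.exp (-(n * Y ω))) ∂P) :
    P.map X = P.map Y := by
  have hexp : Measurable fun x : ℝ => Real.exp (-x) := by fun_prop
  have hE : ∀ {U : Ω → ℝ}, AEMeasurable U P → AEMeasurable (fun ω => Real.exp (-U ω)) P :=
    fun hU => hexp.comp_aemeasurable hU
  have hlaw : ∀ {U : Ω → ℝ}, AEMeasurable U P →
      P.map U = (P.map fun ω => Real.exp (-U ω)).map fun x => -Real.log x := fun hU => by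
    rw [AEMeasurable.map_map_of_aemeasurable (by fun_prop) (hE hU)]
    simp [Function.comp_def]
  have hunit : ∀ {U : Ω → ℝ}, AEMeasurable U P → 0 ≤ᵐ[P] U →
      ∀ᵐ x ∂(P.map fun ω => Real.exp (-U ω)), x ∈ Icc (0 : ℝ) 1 := fun hU hU0 => by
    refine (ae_map_iff (hE hU) measurableSet_Icc).2 (hU0.mono fun ω hω => ?_)
    exact ⟨(Real.exp_pos _).le, Real.exp_le_one_iff.2 (neg_nonpos.2 hω)⟩
  have hmom : ∀ {U : Ω → ℝ}, AEMeasurable U P → ∀ n : ℕ,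
      ∫ x, x ^ n ∂(P.map fun ω => Real.exp (-U ω))
        = (∫⁻ ω, ENNReal.ofReal (Real.exp (-(n * U ω))) ∂P).toReal := fun hU n => by
    rw [integral_map (hE hU) (by fun_prop),
      integral_eq_lintegral_of_nonneg_ae (ae_of_all _ fun ω => by positivity) (by fun_prop)]
    simp_rw [← Real.exp_nat_mul, mul_neg]
  have := Measure.isProbabilityMeasure_map (μ := P) (hE hX)
  have := Measure.isProbabilityMeasure_map (μ := P) (hE hY)
  rw [hlaw hX, hlaw hY, Measure.ext_of_integral_pow_eq (hunit hX hX0) (hunit hY hY0)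
    fun n => by rw [hmom hX, hmom hY, h]]

theorem MeasureTheory.Martingale.exists_ae_tendsto_of_nonneg [IsFiniteMeasure P]
    {ℱ : Filtration ℕ m0} {f : ℕ → Ω → ℝ} (hf : Martingale f ℱ P) (hnn : ∀ n, 0 ≤ᵐ[P] f n) :
    ∀ᵐ ω ∂P, ∃ c, Tendsto (fun n => f n ω) atTop (𝓝 c) := by
  refine hf.submartingale.exists_ae_tendsto_of_bdd (R := (∫ ω, f 0 ω ∂P).toNNReal) fun n => ?_
  rw [eLpNorm_one_eq_lintegral_enorm, ← setIntegral_univ,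
    hf.setIntegral_eq (Nat.zero_le n) MeasurableSet.univ, setIntegral_univ]
  change _ ≤ ENNReal.ofReal _
  rw [ofReal_integral_eq_lintegral_ofReal (hf.integrable n) (hnn n)]
  refine (lintegral_congr_ae ?_).le
  filter_upwards [hnn n] with ω hω
  exact Real.enorm_eq_ofReal hω

theorem tendsto_lintegral_of_le_one [IsFiniteMeasure P] {F : ℕ → Ω → ℝ≥0∞} {f : Ω → ℝ≥0∞}
    (hF : ∀ n, Measurable (F n)) (hF1 : ∀ n ω, F n ω ≤ 1)
    (hlim : ∀ᵐ ω ∂P, Tendsto (fun n => F n ω) atTop (𝓝 (f ω))) :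
    Tendsto (fun n => ∫⁻ ω, F n ω ∂P) atTop (𝓝 (∫⁻ ω, f ω ∂P)) :=
  tendsto_lintegral_of_dominated_convergence 1 hF (fun n => ae_of_all _ (hF1 n))
    (by simp) hlim

structure IsGaltonWatson (P : Measure Ω) (N : ℕ → ℕ → Ω → ℕ) (Z : ℕ → Ω → ℕ) : Prop where
  measurable_offspring : ∀ n i, Measurable (N n i)
  iIndepFun_offspring : iIndepFun (fun ni : ℕ × ℕ => N ni.1 ni.2) P
  zero : ∀ ω, Z 0 ω = 1
  succ : ∀ n ω, Z (n + 1) ω = ∑ i ∈ Finset.range (Z n ω), N n i ω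

namespace IsGaltonWatson

variable {N : ℕ → ℕ → Ω → ℕ} {Z : ℕ → Ω → ℕ}

def filtration (h : IsGaltonWatson P N Z) : Filtration ℕ m0 where
  seq n := ⨆ q ∈ {q : ℕ × ℕ | q.1 < n}, MeasurableSpace.comap (N q.1 q.2) inferInstance
  mono' _ _ hnm := biSup_mono fun _ hq => lt_of_lt_of_le hq hnm
  le' _ := iSup₂_le fun q _ => (h.measurable_offspring q.1 q.2).comap_le

theorem measurable_offspring_filtration (h : IsGaltonWatson P N Z) {j n : ℕ} (hj : j < n)
    (i : ℕ) : Measurable[h.filtration n] (N j i) :=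
  measurable_iff_comap_le.2 (le_biSup (fun q : ℕ × ℕ => MeasurableSpace.comap (N q.1 q.2) _)
    (show (j, i) ∈ {q : ℕ × ℕ | q.1 < n} from hj))

theorem measurable_filtration (h : IsGaltonWatson P N Z) (n : ℕ) :
    Measurable[h.filtration n] (Z n) := by
  induction n with
  | zero => simp only [funext h.zero]; exact measurable_const
  | succ n ih =>
    simp only [funext (h.succ n)]
    exact measurable_apply_nat_index (ih.mono (h.filtration.mono n.le_succ) le_rfl) fun l =>
      Finset.measurable_sum _ fun i _ => h.measurable_offspring_filtration n.lt_succ_self i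

theorem measurable (h : IsGaltonWatson P N Z) (n : ℕ) : Measurable (Z n) :=
  (h.measurable_filtration n).mono (h.filtration.le n) le_rfl

theorem indep_filtration_offspring (h : IsGaltonWatson P N Z) (n : ℕ) :
    Indep (h.filtration n) (⨆ i, MeasurableSpace.comap (N n i) inferInstance) P := by
  have hm : ∀ q : ℕ × ℕ, MeasurableSpace.comap (N q.1 q.2) inferInstance ≤ m0 :=
    fun q => (h.measurable_offspring q.1 q.2).comap_le
  refine indep_of_indep_of_le_right (indep_iSup_of_disjoint hm h.iIndepFun_offspring.iIndep
    (S := {q | q.1 < n}) (T := {q | q.1 = n}) ?_) (iSup_le fun i => ?_)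
  · exact disjoint_left.2 fun q hq hq' => (ne_of_lt hq) hq'
  · exact le_biSup (fun q : ℕ × ℕ => MeasurableSpace.comap (N q.1 q.2) _)
      (show (n, i) ∈ {q : ℕ × ℕ | q.1 = n} from rfl)

theorem lintegral_pow_succ (h : IsGaltonWatson P N Z) {f : ℝ≥0∞ → ℝ≥0∞}
    (hf : ∀ n i s, ∫⁻ ω, s ^ N n i ω ∂P = f s) (n : ℕ) (s : ℝ≥0∞) :
    ∫⁻ ω, s ^ Z (n + 1) ω ∂P = ∫⁻ ω, f s ^ Z n ω ∂P := by
  simp_rw [h.succ n, ← Finset.prod_pow_eq_pow_sum]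
  have hrow : iIndepFun (N n) P :=
    (iIndepFun.precomp (Prod.mk_right_injective n) h.iIndepFun_offspring :)
  exact (h.indep_filtration_offspring n).lintegral_prod_range_eq_lintegral_pow (h.filtration.le n)
    (iSup_le fun i => (h.measurable_offspring n i).comap_le) (h.measurable_filtration n)
    (fun i => measurable_iff_comap_le.2 (le_iSup (fun i => MeasurableSpace.comap (N n i) _) i))
    hrow (measurable_from_nat (f := (s ^ ·))) fun i => hf n i s

theorem lintegral_pow_eq_iterate [IsProbabilityMeasure P] (h : IsGaltonWatson P N Z)
    {f : ℝ≥0∞ → ℝ≥0∞} (hf : ∀ n i s, ∫⁻ ω, s ^ N n i ω ∂P = f s) (n : ℕ) (s : ℝ≥0∞) :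
    ∫⁻ ω, s ^ Z n ω ∂P = f^[n] s := by
  induction n generalizing s with
  | zero => simp [h.zero]
  | succ n ih => rw [h.lintegral_pow_succ hf, ih, Function.iterate_succ_apply]

theorem setLIntegral_succ (h : IsGaltonWatson P N Z) {m : ℝ≥0∞}
    (hmean : ∀ n i, ∫⁻ ω, (N n i ω : ℝ≥0∞) ∂P = m) {n : ℕ} {B : Set Ω}
    (hB : MeasurableSet[h.filtration n] B) :
    ∫⁻ ω in B, (Z (n + 1) ω : ℝ≥0∞) ∂P = ∫⁻ ω in B, Z n ω * m ∂P := by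
  have hrow : ∀ i, Measurable[⨆ i, MeasurableSpace.comap (N n i) inferInstance]
      fun ω => (N n i ω : ℝ≥0∞) := fun i => measurable_from_nat.comp
    (measurable_iff_comap_le.2 (le_iSup (fun i => MeasurableSpace.comap (N n i) _) i))
  simp_rw [h.succ n, Nat.cast_sum]
  rw [(h.indep_filtration_offspring n).setLIntegral_apply_nat_eq (h.filtration.le n)
    (iSup_le fun i => (h.measurable_offspring n i).comap_le) (h.measurable_filtration n)
    (H := fun l ω => ∑ i ∈ Finset.range l, (N n i ω : ℝ≥0∞))
    (fun l => Finset.measurable_sum _ fun i _ => hrow i) hB]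
  congr 1 with ω
  have hN : ∀ i, Measurable fun ω => (N n i ω : ℝ≥0∞) :=
    fun i => measurable_from_nat.comp (h.measurable_offspring n i)
  rw [lintegral_finsetSum _ fun i _ => hN i]
  simp [hmean]

theorem lintegral_natCast [IsProbabilityMeasure P] (h : IsGaltonWatson P N Z) {m : ℝ≥0∞}
    (hmean : ∀ n i, ∫⁻ ω, (N n i ω : ℝ≥0∞) ∂P = m) (n : ℕ) :
    ∫⁻ ω, (Z n ω : ℝ≥0∞) ∂P = m ^ n := by
  induction n with
  | zero => simp [h.zero]
  | succ n ih =>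
    have hstep := h.setLIntegral_succ hmean (n := n) MeasurableSet.univ
    simp only [Measure.restrict_univ] at hstep
    have hZ : Measurable fun ω => (Z n ω : ℝ≥0∞) := measurable_from_nat.comp (h.measurable n)
    rw [hstep, lintegral_mul_const _ hZ, ih, pow_succ]

theorem martingale [IsProbabilityMeasure P] (h : IsGaltonWatson P N Z) {μ : ℝ} (hμ : 0 < μ)
    (hmean : ∀ n i, ∫⁻ ω, (N n i ω : ℝ≥0∞) ∂P = ENNReal.ofReal μ) :
    Martingale (fun n ω => (Z n ω : ℝ) / μ ^ n) h.filtration P := by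
  have hZ : ∀ n, Measurable fun ω => (Z n ω : ℝ≥0∞) :=
    fun n => measurable_from_nat.comp (h.measurable n)
  have hreal : ∀ n (B : Set Ω), ∫ ω in B, (Z n ω : ℝ) ∂P
      = (∫⁻ ω in B, (Z n ω : ℝ≥0∞) ∂P).toReal := fun n B => by
    rw [integral_eq_lintegral_of_nonneg_ae (ae_of_all _ fun ω => Nat.cast_nonneg _)
      (measurable_from_nat.comp (h.measurable n)).aestronglyMeasurable]
    simp
  have hint : ∀ n, Integrable (fun ω => (Z n ω : ℝ)) P := fun n => by
    simpa using integrable_toReal_of_lintegral_ne_top (hZ n).aemeasurable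
      (by rw [h.lintegral_natCast hmean]; exact ENNReal.pow_ne_top ENNReal.ofReal_ne_top)
  refine martingale_of_setIntegral_eq_succ
    (fun n => ((measurable_from_nat.comp (h.measurable_filtration n)).div_const _)
      |>.stronglyMeasurable)
    (fun n => (hint n).div_const _) fun n B hB => ?_
  rw [integral_div, integral_div, hreal, hreal, h.setLIntegral_succ hmean hB,
    lintegral_mul_const _ (hZ n), ENNReal.toReal_mul,
    ENNReal.toReal_ofReal hμ.le, pow_succ, mul_div_mul_right _ _ hμ.ne']

theorem ae_tendsto_limsup [IsProbabilityMeasure P] (h : IsGaltonWatson P N Z) {μ : ℝ}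
    (hμ : 0 < μ) (hmean : ∀ n i, ∫⁻ ω, (N n i ω : ℝ≥0∞) ∂P = ENNReal.ofReal μ) :
    ∀ᵐ ω ∂P, Tendsto (fun n => (Z n ω : ℝ) / μ ^ n) atTop
      (𝓝 (limsup (fun n => (Z n ω : ℝ) / μ ^ n) atTop)) := by
  filter_upwards [(h.martingale hμ hmean).exists_ae_tendsto_of_nonneg
    fun n => ae_of_all _ fun ω => by positivity] with ω ⟨c, hc⟩
  rwa [hc.limsup_eq]

theorem tendsto_iterate_exp_neg [IsProbabilityMeasure P] (h : IsGaltonWatson P N Z)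
    {f : ℝ≥0∞ → ℝ≥0∞} (hf : ∀ n i s, ∫⁻ ω, s ^ N n i ω ∂P = f s) {μ : ℝ} (hμ : 0 ≤ μ)
    {W : Ω → ℝ} (hW : ∀ᵐ ω ∂P, Tendsto (fun n => (Z n ω : ℝ) / μ ^ n) atTop (𝓝 (W ω)))
    {c : ℝ} (hc : 0 ≤ c) :
    Tendsto (fun n => f^[n] (ENNReal.ofReal (Real.exp (-(c / μ ^ n))))) atTop
      (𝓝 (∫⁻ ω, ENNReal.ofReal (Real.exp (-(c * W ω))) ∂P)) := by
  have hpow : ∀ n ω, ENNReal.ofReal (Real.exp (-(c / μ ^ n))) ^ Z n ω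
      = ENNReal.ofReal (Real.exp (-(c * ((Z n ω : ℝ) / μ ^ n)))) := fun n ω => by
    rw [← ENNReal.ofReal_pow (Real.exp_nonneg _), ← Real.exp_nat_mul]
    congr 2
    ring
  simp_rw [← h.lintegral_pow_eq_iterate hf, hpow]
  refine tendsto_lintegral_of_le_one (fun n => ?_) (fun n ω => ?_) ?_
  · have := h.measurable n
    fun_prop
  · exact ENNReal.ofReal_le_one.2 (Real.exp_le_one_iff.2 (neg_nonpos.2 (by positivity)))
  · filter_upwards [hW] with ω hω
    have hcont : Continuous fun x => ENNReal.ofReal (Real.exp (-(c * x))) :=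
      ENNReal.continuous_ofReal.comp (by fun_prop)
    exact (hcont.tendsto _).comp hω

theorem lintegral_exp_neg_mul_eq [IsProbabilityMeasure P] (h : IsGaltonWatson P N Z)
    {f : ℝ≥0∞ → ℝ≥0∞} (hf : ∀ n i s, ∫⁻ ω, s ^ N n i ω ∂P = f s) {μ : ℝ} (hμ : 0 ≤ μ)
    {W : Ω → ℝ} (hW : ∀ᵐ ω ∂P, Tendsto (fun n => (Z n ω : ℝ) / μ ^ n) atTop (𝓝 (W ω)))
    {c : ℝ} (hc : 0 ≤ c) (k : ℕ) :
    ∫⁻ ω, ENNReal.ofReal (Real.exp (-(c * W ω))) ∂P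
      = ∫⁻ ω, (∫⁻ ω', ENNReal.ofReal (Real.exp (-(c / μ ^ k * W ω'))) ∂P) ^ Z k ω ∂P := by
  set e : ℝ → ℝ≥0∞ := fun t => ENNReal.ofReal (Real.exp (-t))
  have hle_one : ∀ n s, s ≤ 1 → f^[n] s ≤ 1 := fun n s hs => by
    rw [← h.lintegral_pow_eq_iterate hf]
    calc ∫⁻ ω, s ^ Z n ω ∂P ≤ ∫⁻ _, 1 ∂P := lintegral_mono fun ω => pow_le_one₀ bot_le hs
      _ = 1 := by simp
  have he_le_one : ∀ n, e (c / μ ^ k / μ ^ n) ≤ 1 := fun n =>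
    ENNReal.ofReal_le_one.2 (Real.exp_le_one_iff.2 (neg_nonpos.2 (by positivity)))
  have hinner := h.tendsto_iterate_exp_neg hf hμ hW (div_nonneg hc (pow_nonneg hμ k))
  have hrhs : Tendsto (fun n => ∫⁻ ω, (f^[n] (e (c / μ ^ k / μ ^ n))) ^ Z k ω ∂P) atTop
      (𝓝 (∫⁻ ω, (∫⁻ ω', e (c / μ ^ k * W ω') ∂P) ^ Z k ω ∂P)) :=
    tendsto_lintegral_of_le_one (fun n => measurable_from_nat.comp (h.measurable k))
      (fun n ω => pow_le_one₀ bot_le (hle_one n _ (he_le_one n)))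
      (ae_of_all _ fun ω => ENNReal.Tendsto.pow hinner)
  have hlhs := (h.tendsto_iterate_exp_neg hf hμ hW hc).comp (tendsto_add_atTop_nat k)
  refine tendsto_nhds_unique hlhs (hrhs.congr fun n => ?_)
  rw [h.lintegral_pow_eq_iterate hf, ← Function.iterate_add_apply, div_div, ← pow_add,
    add_comm k n]
  rfl

end IsGaltonWatson

end

theorem gw_branching_self_similarity_general
    {Ω : Type*} [MeasurableSpace Ω] (P : Measure Ω) [IsProbabilityMeasure P]
    (p : ℕ → ℝ) (N : ℕ → ℕ → Ω → ℕ) (Z : ℕ → Ω → ℕ) (μ : ℝ)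
    (hpnn : ∀ k, 0 ≤ p k)
    (hNmeas : ∀ n i, Measurable (N n i))
    (hNdist : ∀ n i k, (P {ω | N n i ω = k}).toReal = p k)
    (hNindep : iIndepFun (fun ni : ℕ × ℕ => N ni.1 ni.2) P)
    (hmean : HasSum (fun k : ℕ => (k : ℝ) * p k) μ) (hμ : 1 < μ)
    (hZ0 : ∀ ω, Z 0 ω = 1)
    (hZrec : ∀ n ω, Z (n + 1) ω = ∑ i ∈ Finset.range (Z n ω), N n i ω)
    (W : Ω → ℝ)
    (hW : ∀ ω, W ω = Filter.limsup (fun n => (Z n ω : ℝ) / μ ^ n) Filter.atTop)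
    (k : ℕ) (V : ℕ → Ω → ℝ)
    (hVmeas : ∀ i, Measurable (V i))
    (hVdist : ∀ i, P.map (V i) = P.map W)
    (hVindep : iIndepFun
      (fun o : Option ℕ =>
        Option.elim o (fun ω => (Z k ω : ℝ)) (fun i ω => V i ω)) P) :
    P.map W = P.map (fun ω => (∑ i ∈ Finset.range (Z k ω), V i ω) / μ ^ k) := by
  have hμ0 : 0 < μ := zero_lt_one.trans hμ
  have hGW : IsGaltonWatson P N Z := ⟨hNmeas, hNindep, hZ0, hZrec⟩
  have hpgf : ∀ n i s, ∫⁻ ω, s ^ N n i ω ∂P = ∑' j, ENNReal.ofReal (p j) * s ^ j :=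
    fun n i s => lintegral_comp_eq_tsum_ofReal (hNmeas n i) (hNdist n i) (s ^ ·)
  have hWlim : ∀ᵐ ω ∂P, Tendsto (fun n => (Z n ω : ℝ) / μ ^ n) atTop (𝓝 (W ω)) := by
    simpa only [← hW] using hGW.ae_tendsto_limsup hμ0 fun n i =>
      lintegral_natCast_eq_ofReal_of_hasSum (hNmeas n i) (hNdist n i) hpnn hmean
  have hWmeas : AEMeasurable W P := aemeasurable_of_tendsto_metrizable_ae atTop (fun n =>
    ((measurable_from_nat.comp (hGW.measurable n)).div_const _).aemeasurable) hWlim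
  have hW0 : 0 ≤ᵐ[P] W := hWlim.mono fun ω hω => ge_of_tendsto' hω fun n => by positivity
  have hVW : ∀ i, IdentDistrib (V i) W P P :=
    fun i => ⟨(hVmeas i).aemeasurable, hWmeas, hVdist i⟩
  have hV0 : ∀ᵐ ω ∂P, ∀ i, 0 ≤ V i ω :=
    ae_all_iff.2 fun i => (hVW i).symm.ae_mem_snd measurableSet_Ici hW0
  refine map_eq_of_lintegral_exp_neg_nat_mul_eq hWmeas ?_ hW0 ?_ fun n => ?_
  · exact ((measurable_apply_nat_index (hGW.measurable k) fun l =>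
      Finset.measurable_sum _ fun i _ => hVmeas i).div_const _).aemeasurable
  · filter_upwards [hV0] with ω hω
    exact div_nonneg (Finset.sum_nonneg fun i _ => hω i) (by positivity)
  rw [hGW.lintegral_exp_neg_mul_eq hpgf hμ0.le hWlim n.cast_nonneg k,
    ← hVindep.lintegral_exp_neg_mul_sum_range (hGW.measurable k) hVmeas hVW]
  simp_rw [mul_div_assoc', div_mul_eq_mul_div]

theorem gw_branching_self_similarity
    {Ω : Type*} [MeasurableSpace Ω] (P : Measure Ω) [IsProbabilityMeasure P]
    (p : ℕ → ℝ) (N : ℕ → ℕ → Ω → ℕ) (Z : ℕ → Ω → ℕ) (μ : ℝ)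
    (hp0 : p 0 = 0) (hpnn : ∀ k, 0 ≤ p k) (hpsum : HasSum p 1)
    (hnondeg : ∀ k, p k < 1)
    (hNmeas : ∀ n i, Measurable (N n i))
    (hNdist : ∀ n i k, (P {ω | N n i ω = k}).toReal = p k)
    (hNindep : iIndepFun (fun ni : ℕ × ℕ => N ni.1 ni.2) P)
    (hmean : HasSum (fun k : ℕ => (k : ℝ) * p k) μ) (hμ : 1 < μ)
    (hNlogN : Summable (fun k : ℕ => (k : ℝ) * Real.log k * p k))
    (hZ0 : ∀ ω, Z 0 ω = 1)
    (hZrec : ∀ n ω, Z (n + 1) ω = ∑ i ∈ Finset.range (Z n ω), N n i ω)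
    (W : Ω → ℝ)
    (hW : ∀ ω, W ω = Filter.limsup (fun n => (Z n ω : ℝ) / μ ^ n) Filter.atTop)
    (k : ℕ) (V : ℕ → Ω → ℝ)
    (hVmeas : ∀ i, Measurable (V i))
    (hVdist : ∀ i, P.map (V i) = P.map W)
    (hVindep : iIndepFun
      (fun o : Option ℕ =>
        Option.elim o (fun ω => (Z k ω : ℝ)) (fun i ω => V i ω)) P) :
    P.map W = P.map (fun ω => (∑ i ∈ Finset.range (Z k ω), V i ω) / μ ^ k) :=
  gw_branching_self_similarity_general P p N Z μ hpnn hNmeas hNdist hNindep hmean hμ hZ0 hZrec W hW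
    k V hVmeas hVdist hVindep
end
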